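/- Let D be a bumpless pipe dream of π ∈ S_n and let (i,j) be the position of an r-shaped turn of the pipe p with label π(x). If every tile (i, j') with j' > j is a '+'-tile, or every tile (i', j) with i' > i is a '+'-tile, then every tile (i', j') with i' ≥ i, j' ≥ j and (i',j') ≠ (i,j) is a '+'-tile, and consequently there is no y > x such that π t_{x,y} ⋗ π. -/

import Mathlib

namespace BPD

/-- The six legal tiles of a bumpless pipe dream, plus the `Bump` tile
(used in *almost* bumpless pipe dreams). -/
inductive Tile : Type
  | R      -- pipe turning from the south edge to the east edge ("r-tile")
  | J      -- pipe turning from the west edge to the north edge ("j-tile")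
  | Cross  -- two pipes crossing ("+"-tile)
  | Blank  -- blank tile
  | H      -- horizontal pipe segment ("−"-tile)
  | V      -- vertical pipe segment ("|"-tile)
  | Bump   -- bump tile: one r-shaped turn and one j-shaped turn
  deriving DecidableEq

instance : Fintype Tile :=
  Fintype.ofList [Tile.R, Tile.J, Tile.Cross, Tile.Blank, Tile.H, Tile.V, Tile.Bump]
    (by intro x; cases x <;> simp)

/-- A tiling of the n×n grid, in matrix coordinates (row, column). -/
abbrev Tiling (n : ℕ) := Fin n → Fin n → Tile

namespace Tile

/-- Does a tile carry a pipe on its south edge? -/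
def southE : Tile → Bool
  | R => true | Cross => true | V => true | Bump => true | _ => false

/-- Does a tile carry a pipe on its east edge? -/
def eastE : Tile → Bool
  | R => true | Cross => true | H => true | Bump => true | _ => false

/-- Does a tile carry a pipe on its north edge? -/
def northE : Tile → Bool
  | J => true | Cross => true | V => true | Bump => true | _ => false

/-- Does a tile carry a pipe on its west edge? -/
def westE : Tile → Bool
  | J => true | Cross => true | H => true | Bump => true | _ => false

end Tile

/-- Edge-matching and boundary conditions: adjacent tiles agree on their shared
edge; every column carries a pipe through the south boundary, every row carries a
pipe through the east boundary, and no pipe touches the north or west boundary.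
This says exactly that the tiling consists of `n` pipes, each traveling from the
south boundary to the east boundary. -/
def Wellformed {n : ℕ} (T : Tiling n) : Prop :=
  (∀ i j : Fin n, ∀ h : (j : ℕ) + 1 < n,
      Tile.eastE (T i j) = Tile.westE (T i ⟨(j : ℕ) + 1, h⟩)) ∧
  (∀ i j : Fin n, ∀ h : (i : ℕ) + 1 < n,
      Tile.southE (T i j) = Tile.northE (T ⟨(i : ℕ) + 1, h⟩ j)) ∧
  (∀ j : Fin n, Tile.southE (T ⟨n - 1, by have := j.2; omega⟩ j) = true) ∧
  (∀ i : Fin n, Tile.eastE (T i ⟨n - 1, by have := i.2; omega⟩) = true) ∧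
  (∀ j : Fin n, Tile.northE (T ⟨0, by have := j.2; omega⟩ j) = false) ∧
  (∀ i : Fin n, Tile.westE (T i ⟨0, by have := i.2; omega⟩) = false)

/-- The state of a pipe while being traced through the grid:
`inside i j up` means the pipe is in cell `(i,j)`, having entered from the south
edge (`up = true`, traveling upward) or from the west edge (`up = false`,
traveling rightward); `exited r` means the pipe has left through the east
boundary at row `r`. -/
inductive PState (n : ℕ) : Type
  | inside (i j : Fin n) (up : Bool)
  | exited (row : Fin n)
  | stuck
  deriving DecidableEq

/-- Exit a cell through its east edge. -/
def goEast {n : ℕ} (i j : Fin n) : PState n :=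
  if h : (j : ℕ) + 1 < n then PState.inside i ⟨(j : ℕ) + 1, h⟩ false
  else PState.exited i

/-- Exit a cell through its north edge. -/
def goNorth {n : ℕ} (i j : Fin n) : PState n :=
  if h : 0 < (i : ℕ) then PState.inside ⟨(i : ℕ) - 1, by have := i.2; omega⟩ j true
  else PState.stuck

/-- One step of tracing a pipe through a tiling. -/
def stepSt {n : ℕ} (T : Tiling n) : PState n → PState n
  | PState.inside i j up =>
    match up, T i j with
    | true, Tile.R => goEast i j
    | true, Tile.V => goNorth i j
    | true, Tile.Cross => goNorth i j
    | true, Tile.Bump => goEast i j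
    | false, Tile.J => goNorth i j
    | false, Tile.H => goEast i j
    | false, Tile.Cross => goEast i j
    | false, Tile.Bump => goNorth i j
    | _, _ => PState.stuck
  | PState.exited r => PState.exited r
  | PState.stuck => PState.stuck

/-- The starting state of the pipe entering the grid at the south boundary in
column `c` (0-indexed): it enters cell `(n-1, c)` from the south. -/
def start {n : ℕ} (c : Fin n) : PState n :=
  PState.inside ⟨n - 1, by have := c.2; omega⟩ c true

/-- The pipe entering at the south boundary in column `c` reaches the state `s`. -/
def reaches {n : ℕ} (T : Tiling n) (c : Fin n) (s : PState n) : Prop :=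
  ∃ k : ℕ, (stepSt T)^[k] (start c) = s

/-- The tiling realizes the permutation `π`: for every row `i` of the east
boundary, the pipe exiting there is the one labeled `π i`, i.e. the one
entering at the south boundary in column `π i` (0-indexed). -/
def TracesTo {n : ℕ} (T : Tiling n) (π : Equiv.Perm (Fin n)) : Prop :=
  ∀ i : Fin n, reaches T (π i) (PState.exited i)

/-- The pipes (labeled by their entry columns) `p` and `q` cross at the
'+'-tile in position `(r, c)`. -/
def crossingAt {n : ℕ} (T : Tiling n) (p q : Fin n) (r c : Fin n) : Prop :=
  T r c = Tile.Cross ∧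
    ((reaches T p (PState.inside r c true) ∧ reaches T q (PState.inside r c false)) ∨
     (reaches T p (PState.inside r c false) ∧ reaches T q (PState.inside r c true)))

/-- No two pipes cross twice. -/
def Reduced {n : ℕ} (T : Tiling n) : Prop :=
  ∀ p q r₁ c₁ r₂ c₂ : Fin n,
    crossingAt T p q r₁ c₁ → crossingAt T p q r₂ c₂ → (r₁, c₁) = (r₂, c₂)

/-- `T` is a (reduced) bumpless pipe dream of the permutation `π`. -/
def IsBPD {n : ℕ} (T : Tiling n) (π : Equiv.Perm (Fin n)) : Prop :=
  Wellformed T ∧ (∀ i j : Fin n, T i j ≠ Tile.Bump) ∧ TracesTo T π ∧ Reduced T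

/-- `T` is an *almost* bumpless pipe dream of `π`, with its unique bump tile at
position `(i, j)`. -/
def IsAlmostBPD {n : ℕ} (T : Tiling n) (π : Equiv.Perm (Fin n)) (i j : Fin n) : Prop :=
  Wellformed T ∧ T i j = Tile.Bump ∧
    (∀ i' j' : Fin n, T i' j' = Tile.Bump → (i', j') = (i, j)) ∧
    TracesTo T π ∧ Reduced T

/-- `T` is a bumpless pipe dream or an almost bumpless pipe dream of `π`. -/
def BPDorAlmost {n : ℕ} (T : Tiling n) (π : Equiv.Perm (Fin n)) : Prop :=
  IsBPD T π ∨ ∃ u v : Fin n, IsAlmostBPD T π u v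

/-- The set of positions of blank tiles of `T`. -/
def blanks {n : ℕ} (T : Tiling n) : Finset (Fin n × Fin n) :=
  Finset.univ.filter fun p => T p.1 p.2 = Tile.Blank

/-- The number of blank tiles of `T` in row `i`. -/
def rowBlanks {n : ℕ} (T : Tiling n) (i : Fin n) : ℕ :=
  (Finset.univ.filter fun j => T i j = Tile.Blank).card

open scoped Classical in
/-- The single Schubert polynomial of `π`, computed with bumpless pipe dreams:
`𝔖_π(x) = Σ_{D ∈ BPD(π)} Π_{(i,j) ∈ blank(D)} x_i`. -/
noncomputable def Schub (n : ℕ) (π : Equiv.Perm (Fin n)) : MvPolynomial (Fin n) ℤ :=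
  ∑ T : Tiling n, if IsBPD T π then ∏ p ∈ blanks T, MvPolynomial.X p.1 else 0

open scoped Classical in
/-- The double Schubert polynomial of `π`, computed with bumpless pipe dreams:
`𝔖_π(x, −y) = Σ_{D ∈ BPD(π)} Π_{(i,j) ∈ blank(D)} (x_i − y_j)`.
The variable `x_i` is `X (Sum.inl i)` and `y_j` is `X (Sum.inr j)`. -/
noncomputable def DSchub (n : ℕ) (π : Equiv.Perm (Fin n)) :
    MvPolynomial (Fin n ⊕ Fin n) ℤ :=
  ∑ T : Tiling n,
    if IsBPD T π then
      ∏ p ∈ blanks T,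
        (MvPolynomial.X (Sum.inl p.1) - MvPolynomial.X (Sum.inr p.2))
    else 0

/-- The Coxeter length of a permutation: its number of inversions. -/
def len {n : ℕ} (π : Equiv.Perm (Fin n)) : ℕ :=
  (Finset.univ.filter fun p : Fin n × Fin n => p.1 < p.2 ∧ π p.2 < π p.1).card

/-- `σ ⋗ π`: `σ` covers `π` in the strong Bruhat order, i.e. `σ = π·t` for some
transposition `t` and `ℓ(σ) = ℓ(π) + 1`. -/
def Covers {n : ℕ} (σ π : Equiv.Perm (Fin n)) : Prop :=
  (∃ a b : Fin n, a ≠ b ∧ σ = π * Equiv.swap a b) ∧ len σ = len π + 1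


section Aux

variable {n : ℕ} {T : Tiling n}

lemma cross_of_NE {t : Tile} (hb : t ≠ Tile.Bump) (hN : t.northE = true)
    (hE : t.eastE = true) : t = Tile.Cross := by
  cases t <;> simp_all [Tile.northE, Tile.eastE]

lemma cross_of_SW {t : Tile} (hb : t ≠ Tile.Bump) (hS : t.southE = true)
    (hW : t.westE = true) : t = Tile.Cross := by
  cases t <;> simp_all [Tile.southE, Tile.westE]

lemma rowProp (hW : Wellformed T) (hB : ∀ a b : Fin n, T a b ≠ Tile.Bump)
    (i : Fin n) (hi : (i : ℕ) + 1 < n) (j : Fin n)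
    (hs : ∀ j' : Fin n, j ≤ j' → (T i j').southE = true) :
    ∀ j' : Fin n, j ≤ j' → T ⟨(i : ℕ) + 1, hi⟩ j' = Tile.Cross := by
  obtain ⟨h1, h2, h3, h4, h5, h6⟩ := hW
  have key : ∀ m : ℕ, ∀ j' : Fin n, j ≤ j' → n - 1 - (j' : ℕ) = m →
      T ⟨(i : ℕ) + 1, hi⟩ j' = Tile.Cross := by
    intro m
    induction m using Nat.strong_induction_on with
    | _ m IH =>
      intro j' hj' hm
      have hN : (T ⟨(i : ℕ) + 1, hi⟩ j').northE = true := by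
        rw [← h2 i j' hi]; exact hs j' hj'
      have hE : (T ⟨(i : ℕ) + 1, hi⟩ j').eastE = true := by
        by_cases hlt : (j' : ℕ) + 1 < n
        · have hnext : T ⟨(i : ℕ) + 1, hi⟩ ⟨(j' : ℕ) + 1, hlt⟩ = Tile.Cross := by
            apply IH (n - 1 - ((j' : ℕ) + 1)) (by omega) ⟨(j' : ℕ) + 1, hlt⟩
            · simp only [Fin.le_def, Fin.val_mk] at *; omega
            · rfl
          rw [h1 ⟨(i : ℕ) + 1, hi⟩ j' hlt, hnext]; rfl
        · have hj'' : j' = ⟨n - 1, by omega⟩ := by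
            apply Fin.ext; have := j'.2; simp; omega
          rw [hj'']; exact h4 ⟨(i : ℕ) + 1, hi⟩
      exact cross_of_NE (hB _ _) hN hE
  intro j' hj'
  exact key (n - 1 - (j' : ℕ)) j' hj' rfl

lemma colProp (hW : Wellformed T) (hB : ∀ a b : Fin n, T a b ≠ Tile.Bump)
    (j : Fin n) (hj : (j : ℕ) + 1 < n) (i : Fin n)
    (he : ∀ i' : Fin n, i ≤ i' → (T i' j).eastE = true) :
    ∀ i' : Fin n, i ≤ i' → T i' ⟨(j : ℕ) + 1, hj⟩ = Tile.Cross := by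
  obtain ⟨h1, h2, h3, h4, h5, h6⟩ := hW
  have key : ∀ m : ℕ, ∀ i' : Fin n, i ≤ i' → n - 1 - (i' : ℕ) = m →
      T i' ⟨(j : ℕ) + 1, hj⟩ = Tile.Cross := by
    intro m
    induction m using Nat.strong_induction_on with
    | _ m IH =>
      intro i' hi' hm
      have hWe : (T i' ⟨(j : ℕ) + 1, hj⟩).westE = true := by
        rw [← h1 i' j hj]; exact he i' hi'
      have hS : (T i' ⟨(j : ℕ) + 1, hj⟩).southE = true := by
        by_cases hlt : (i' : ℕ) + 1 < n
        · have hnext : T ⟨(i' : ℕ) + 1, hlt⟩ ⟨(j : ℕ) + 1, hj⟩ = Tile.Cross := by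
            apply IH (n - 1 - ((i' : ℕ) + 1)) (by omega) ⟨(i' : ℕ) + 1, hlt⟩
            · simp only [Fin.le_def, Fin.val_mk] at *; omega
            · rfl
          rw [h2 i' ⟨(j : ℕ) + 1, hj⟩ hlt, hnext]; rfl
        · have hi'' : i' = ⟨n - 1, by omega⟩ := by
            apply Fin.ext; have := i'.2; simp; omega
          rw [hi'']; exact h3 ⟨(j : ℕ) + 1, hj⟩
      exact cross_of_SW (hB _ _) hS hWe
  intro i' hi'
  exact key (n - 1 - (i' : ℕ)) i' hi' rfl


lemma region (hW : Wellformed T) (hB : ∀ a b : Fin n, T a b ≠ Tile.Bump)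
    (i j : Fin n) (hr : T i j = Tile.R)
    (hrow : (∀ j' : Fin n, j < j' → T i j' = Tile.Cross) ∨
            (∀ i' : Fin n, i < i' → T i' j = Tile.Cross)) :
    ∀ i' j' : Fin n, i ≤ i' → j ≤ j' → (i', j') ≠ (i, j) → T i' j' = Tile.Cross := by
  rcases hrow with hrow | hcol
  · -- row case: induct down the rows
    have key : ∀ m : ℕ, ∀ i' : Fin n, (i' : ℕ) = (i : ℕ) + 1 + m →
        ∀ j' : Fin n, j ≤ j' → T i' j' = Tile.Cross := by
      intro m
      induction m with
      | zero =>
        intro i' hi' j' hj'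
        have hi1 : (i : ℕ) + 1 < n := by have := i'.2; omega
        have hs : ∀ j'' : Fin n, j ≤ j'' → (T i j'').southE = true := by
          intro j'' hj''
          rcases eq_or_lt_of_le hj'' with rfl | hlt
          · rw [hr]; rfl
          · rw [hrow j'' hlt]; rfl
        have := rowProp hW hB i hi1 j hs j' hj'
        have hieq : i' = ⟨(i : ℕ) + 1, hi1⟩ := Fin.ext (by simp [hi'])
        rw [hieq]; exact this
      | succ m IH =>
        intro i' hi' j' hj'
        have hi1 : (i : ℕ) + 1 + m + 1 < n := by have := i'.2; omega
        set i'' : Fin n := ⟨(i : ℕ) + 1 + m, by omega⟩ with hi''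
        have hprev : ∀ j'' : Fin n, j ≤ j'' → T i'' j'' = Tile.Cross := by
          intro j'' hj''; exact IH i'' rfl j'' hj''
        have hs : ∀ j'' : Fin n, j ≤ j'' → (T i'' j'').southE = true := by
          intro j'' hj''; rw [hprev j'' hj'']; rfl
        have hi2 : (i'' : ℕ) + 1 < n := by simp [hi'']; omega
        have := rowProp hW hB i'' hi2 j hs j' hj'
        have hieq : i' = ⟨(i'' : ℕ) + 1, hi2⟩ := Fin.ext (by simp [hi'', hi']; omega)
        rw [hieq]; exact this
    intro i' j' hii hjj hne
    rcases eq_or_lt_of_le hii with rfl | hlt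
    · rcases eq_or_lt_of_le hjj with rfl | hlt'
      · exact absurd rfl hne
      · exact hrow j' hlt'
    · exact key ((i' : ℕ) - (i : ℕ) - 1) i' (by
        have := Fin.lt_def.mp hlt; omega) j' hjj
  · -- column case: induct right through the columns
    have key : ∀ m : ℕ, ∀ j' : Fin n, (j' : ℕ) = (j : ℕ) + 1 + m →
        ∀ i' : Fin n, i ≤ i' → T i' j' = Tile.Cross := by
      intro m
      induction m with
      | zero =>
        intro j' hj' i' hi'
        have hj1 : (j : ℕ) + 1 < n := by have := j'.2; omega
        have he : ∀ i'' : Fin n, i ≤ i'' → (T i'' j).eastE = true := by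
          intro i'' hi''
          rcases eq_or_lt_of_le hi'' with rfl | hlt
          · rw [hr]; rfl
          · rw [hcol i'' hlt]; rfl
        have := colProp hW hB j hj1 i he i' hi'
        have hjeq : j' = ⟨(j : ℕ) + 1, hj1⟩ := Fin.ext (by simp [hj'])
        rw [hjeq]; exact this
      | succ m IH =>
        intro j' hj' i' hi'
        have hj1 : (j : ℕ) + 1 + m + 1 < n := by have := j'.2; omega
        set j'' : Fin n := ⟨(j : ℕ) + 1 + m, by omega⟩ with hj''
        have hprev : ∀ i'' : Fin n, i ≤ i'' → T i'' j'' = Tile.Cross := by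
          intro i'' hi''; exact IH j'' rfl i'' hi''
        have he : ∀ i'' : Fin n, i ≤ i'' → (T i'' j'').eastE = true := by
          intro i'' hi''; rw [hprev i'' hi'']; rfl
        have hj2 : (j'' : ℕ) + 1 < n := by simp [hj'']; omega
        have := colProp hW hB j'' hj2 i he i' hi'
        have hjeq : j' = ⟨(j'' : ℕ) + 1, hj2⟩ := Fin.ext (by simp [hj'', hj']; omega)
        rw [hjeq]; exact this
    intro i' j' hii hjj hne
    rcases eq_or_lt_of_le hjj with rfl | hlt
    · rcases eq_or_lt_of_le hii with rfl | hlt'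
      · exact absurd rfl hne
      · exact hcol i' hlt'
    · exact key ((j' : ℕ) - (j : ℕ) - 1) j' (by
        have := Fin.lt_def.mp hlt; omega) i' hii


lemma stepSt_exited (r : Fin n) (m : ℕ) :
    (stepSt T)^[m] (PState.exited r) = PState.exited r :=
  Function.iterate_fixed rfl m

lemma reaches_step {c : Fin n} {s : PState n} (h : reaches T c s) :
    reaches T c (stepSt T s) := by
  obtain ⟨k, hk⟩ := h
  exact ⟨k + 1, by rw [Function.iterate_succ_apply', hk]⟩

lemma exit_unique {c r r' : Fin n} (h1 : reaches T c (PState.exited r))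
    (h2 : reaches T c (PState.exited r')) : r = r' := by
  obtain ⟨k, hk⟩ := h1
  obtain ⟨m, hm⟩ := h2
  have key : ∀ a b : ℕ, a ≤ b → ∀ s s' : Fin n,
      (stepSt T)^[a] (start c) = PState.exited s →
      (stepSt T)^[b] (start c) = PState.exited s' → s = s' := by
    intro a b hab s s' ha hb
    have : (stepSt T)^[b] (start c) = PState.exited s := by
      rw [show b = (b - a) + a by omega, Function.iterate_add_apply, ha, stepSt_exited]
    rw [hb] at this
    exact (PState.exited.inj this).symm
  rcases le_total k m with h | h
  · exact key k m h r r' hk hm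
  · exact (key m k h r' r hm hk).symm

lemma goEast_eq_inside {i j a b : Fin n} {u : Bool}
    (h : goEast i j = PState.inside a b u) :
    a = i ∧ (b : ℕ) = (j : ℕ) + 1 ∧ u = false := by
  unfold goEast at h
  split at h
  · obtain ⟨h1, h2, h3⟩ := PState.inside.inj h
    exact ⟨h1.symm, by rw [← h2], h3.symm⟩
  · simp at h

lemma goEast_eq_exited {i j r : Fin n} (h : goEast i j = PState.exited r) :
    i = r ∧ (j : ℕ) = n - 1 := by
  unfold goEast at h
  split at h
  · simp at h
  · next hn => exact ⟨PState.exited.inj h, by have := j.2; omega⟩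

lemma goNorth_eq_inside {i j a b : Fin n} {u : Bool}
    (h : goNorth i j = PState.inside a b u) :
    (a : ℕ) + 1 = (i : ℕ) ∧ (b : ℕ) = (j : ℕ) ∧ u = true := by
  unfold goNorth at h
  split at h
  · next hn =>
    obtain ⟨h1, h2, h3⟩ := PState.inside.inj h
    refine ⟨?_, by rw [h2], h3.symm⟩
    have := congrArg Fin.val h1; simp at this; omega
  · simp at h

lemma goNorth_ne_exited {i j r : Fin n} : goNorth i j ≠ PState.exited r := by
  unfold goNorth
  split <;> simp

lemma col_mono {c : Fin n} : ∀ (k : ℕ) (a b : Fin n) (u : Bool),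
    (stepSt T)^[k] (start c) = PState.inside a b u → (c : ℕ) ≤ (b : ℕ) := by
  intro k
  induction k with
  | zero =>
    intro a b u h
    simp only [Function.iterate_zero, id_eq, start] at h
    obtain ⟨_, h2, _⟩ := PState.inside.inj h
    rw [h2]
  | succ k IH =>
    intro a b u h
    rw [Function.iterate_succ_apply'] at h
    cases hs : (stepSt T)^[k] (start c) with
    | inside a' b' u' =>
      rw [hs] at h
      have hcb' := IH a' b' u' hs
      cases u' <;> rcases hT' : T a' b' with _ | _ | _ | _ | _ | _ | _ <;>
        simp only [stepSt, hT'] at h <;>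
        first
        | exact absurd h (by simp)
        | (obtain ⟨_, hb, _⟩ := goEast_eq_inside h; omega)
        | (obtain ⟨_, hb, _⟩ := goNorth_eq_inside h; omega)
    | exited r => rw [hs] at h; simp [stepSt] at h
    | stuck => rw [hs] at h; simp [stepSt] at h


open Classical in
lemma pred {c : Fin n} {s' : PState n} (h : reaches T c s') (h0 : s' ≠ start c) :
    ∃ s, reaches T c s ∧ stepSt T s = s' ∧ s ≠ s' := by
  have hex : ∃ k, (stepSt T)^[k] (start c) = s' := h
  have hk0 := Nat.find_spec hex
  set k0 := Nat.find hex with hk0def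
  have hpos : 0 < k0 := by
    rcases Nat.eq_zero_or_pos k0 with hz | hp
    · rw [hz] at hk0
      simp only [Function.iterate_zero, id_eq] at hk0
      exact absurd hk0.symm h0
    · exact hp
  refine ⟨(stepSt T)^[k0 - 1] (start c), ⟨k0 - 1, rfl⟩, ?_, ?_⟩
  · have : (stepSt T)^[(k0 - 1) + 1] (start c) = s' := by
      rw [show k0 - 1 + 1 = k0 by omega]; exact hk0
    rw [Function.iterate_succ_apply'] at this
    exact this
  · intro he
    exact Nat.find_min hex (show k0 - 1 < k0 by omega) he

/-- Analysis of a predecessor of an `exited` state. -/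
lemma step_src_exited {s : PState n} {r : Fin n}
    (hstep : stepSt T s = PState.exited r) (hne : s ≠ PState.exited r) :
    ∃ (b : Fin n) (u : Bool), s = PState.inside r b u ∧ (b : ℕ) = n - 1 ∧
      (u = true → T r b = Tile.R ∨ T r b = Tile.Bump) ∧
      (u = false → T r b = Tile.H ∨ T r b = Tile.Cross ∨ T r b = Tile.Bump) := by
  cases s with
  | exited r' => simp [stepSt] at hstep; exact absurd (by rw [hstep]) hne
  | stuck => simp [stepSt] at hstep
  | inside a b u =>
    cases u <;> rcases hT' : T a b with _ | _ | _ | _ | _ | _ | _ <;>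
      simp only [stepSt, hT'] at hstep <;>
      first
      | exact absurd hstep (by simp)
      | exact absurd hstep goNorth_ne_exited
      | (obtain ⟨h1, h2⟩ := goEast_eq_exited hstep;
         subst h1;
         exact ⟨b, _, rfl, h2, by simp [hT'], by simp [hT']⟩)

/-- Analysis of a predecessor of an `inside _ _ false` state. -/
lemma step_src_inside {s : PState n} {a b : Fin n}
    (hstep : stepSt T s = PState.inside a b false) (hne : s ≠ PState.inside a b false) :
    ∃ (b' : Fin n) (u : Bool), s = PState.inside a b' u ∧ (b' : ℕ) + 1 = (b : ℕ) ∧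
      (u = true → T a b' = Tile.R ∨ T a b' = Tile.Bump) ∧
      (u = false → T a b' = Tile.H ∨ T a b' = Tile.Cross ∨ T a b' = Tile.Bump) := by
  cases s with
  | exited r' => simp [stepSt] at hstep
  | stuck => simp [stepSt] at hstep
  | inside a' b' u =>
    cases u <;> rcases hT' : T a' b' with _ | _ | _ | _ | _ | _ | _ <;>
      simp only [stepSt, hT'] at hstep <;>
      first
      | exact absurd hstep (by simp)
      | (obtain ⟨h1, h2, h3⟩ := goNorth_eq_inside hstep; exact absurd h3.symm (by simp))
      | (obtain ⟨h1, h2, _⟩ := goEast_eq_inside hstep;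
         subst h1;
         exact ⟨b', _, rfl, by omega, by simp [hT'], by simp [hT']⟩)


lemma fwd_exit (i j : Fin n) (hr : T i j = Tile.R)
    (hreg : ∀ i' j' : Fin n, i ≤ i' → j ≤ j' → (i', j') ≠ (i, j) → T i' j' = Tile.Cross)
    {c : Fin n} (h : reaches T c (PState.inside i j true)) :
    reaches T c (PState.exited i) := by
  by_cases hjn : (j : ℕ) + 1 < n
  · have h1 : reaches T c (PState.inside i ⟨(j : ℕ) + 1, hjn⟩ false) := by
      have hst := reaches_step h
      rwa [show stepSt T (PState.inside i j true) = PState.inside i ⟨(j : ℕ) + 1, hjn⟩ false by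
        simp only [stepSt, hr]; unfold goEast; rw [dif_pos hjn]] at hst
    have key : ∀ m : ℕ, ∀ c' : Fin n, (c' : ℕ) = (j : ℕ) + 1 + m →
        reaches T c (PState.inside i c' false) := by
      intro m
      induction m with
      | zero =>
        intro c' hc'
        have : c' = ⟨(j : ℕ) + 1, hjn⟩ := Fin.ext (by simpa using hc')
        rw [this]; exact h1
      | succ m IH =>
        intro c' hc'
        have hlt : (j : ℕ) + 1 + m < n := by have := c'.2; omega
        set c'' : Fin n := ⟨(j : ℕ) + 1 + m, hlt⟩ with hc''
        have h2 := IH c'' rfl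
        have hcr : T i c'' = Tile.Cross := by
          apply hreg i c'' le_rfl (by rw [Fin.le_def]; simp [hc'']; omega)
          intro hcontra
          have := congrArg (fun p => (Fin.val p.2)) hcontra
          simp [hc''] at this; omega
        have hlt2 : (c'' : ℕ) + 1 < n := by have := c'.2; simp [hc'']; omega
        have hst := reaches_step h2
        rwa [show stepSt T (PState.inside i c'' false) = PState.inside i c' false by
          simp only [stepSt, hcr]; unfold goEast; rw [dif_pos hlt2]
          congr 1; exact Fin.ext (by simp [hc'', hc']; omega)] at hst
    have hlast := key (n - 1 - ((j : ℕ) + 1)) ⟨n - 1, by omega⟩ (by simp; omega)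
    have hcr : T i ⟨n - 1, by omega⟩ = Tile.Cross := by
      apply hreg i _ le_rfl (by rw [Fin.le_def]; simp; omega)
      intro hcontra
      have := congrArg (fun p => (Fin.val p.2)) hcontra
      simp at this; omega
    have hst := reaches_step hlast
    rwa [show stepSt T (PState.inside i ⟨n - 1, by omega⟩ false) = PState.exited i by
      simp only [stepSt, hcr]; unfold goEast; rw [dif_neg (by simp; omega)]] at hst
  · have hst := reaches_step h
    rwa [show stepSt T (PState.inside i j true) = PState.exited i by
      simp only [stepSt, hr]; unfold goEast; rw [dif_neg hjn]] at hst

lemma pipe_up (i j : Fin n)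
    (hreg : ∀ i' j' : Fin n, i ≤ i' → j ≤ j' → (i', j') ≠ (i, j) → T i' j' = Tile.Cross) :
    reaches T j (PState.inside i j true) := by
  have key : ∀ m : ℕ, m ≤ n - 1 - (i : ℕ) → ∀ a : Fin n, (a : ℕ) = n - 1 - m → i ≤ a →
      (stepSt T)^[m] (start j) = PState.inside a j true := by
    intro m
    induction m with
    | zero =>
      intro _ a ha _
      simp only [Function.iterate_zero, id_eq, start]
      congr 1
      exact Fin.ext (by simp [ha])
    | succ m IH =>
      intro hm a ha hia
      have hin : (i : ℕ) < n := i.2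
      have han : (a : ℕ) = n - 1 - (m + 1) := ha
      have hian : (i : ℕ) ≤ (a : ℕ) := Fin.le_def.mp hia
      have h1 : n - 1 - m < n := by omega
      set a' : Fin n := ⟨n - 1 - m, h1⟩ with ha'
      have hvala' : (a' : ℕ) = n - 1 - m := rfl
      have hIH := IH (by omega) a' rfl (by rw [Fin.le_def]; rw [hvala']; omega)
      rw [Function.iterate_succ_apply', hIH]
      have hcr : T a' j = Tile.Cross := by
        apply hreg a' j (by rw [Fin.le_def, hvala']; omega) le_rfl
        intro hcontra
        have h5 : (a' : ℕ) = (i : ℕ) := by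
          have := congrArg (fun p => (Fin.val p.1)) hcontra
          simpa using this
        rw [hvala'] at h5; omega
      simp only [stepSt, hcr]; unfold goNorth
      rw [dif_pos (show 0 < (a' : ℕ) by rw [hvala']; omega)]
      congr 1
      exact Fin.ext (by simp [ha]; omega)
  exact ⟨n - 1 - (i : ℕ), key _ le_rfl i (by have := i.2; omega) le_rfl⟩


lemma backtrace (i j : Fin n)
    (hreg : ∀ i' j' : Fin n, i ≤ i' → j ≤ j' → (i', j') ≠ (i, j) → T i' j' = Tile.Cross)
    (hB : ∀ a b : Fin n, T a b ≠ Tile.Bump)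
    {c y : Fin n} (hy : i < y) (hrch : reaches T c (PState.exited y)) (hj : 1 ≤ (j : ℕ)) :
    (c : ℕ) < (j : ℕ) := by
  have hyne : ∀ b : Fin n, j ≤ b → T y b = Tile.Cross := by
    intro b hb
    apply hreg y b (le_of_lt hy) hb
    intro hcontra
    have h5 : (y : ℕ) = (i : ℕ) := by
      have := congrArg (fun p => (Fin.val p.1)) hcontra
      simpa using this
    have := Fin.lt_def.mp hy; omega
  have hjn : (j : ℕ) < n := j.2
  -- climb back along row y
  have key : ∀ m : ℕ, ∀ b : Fin n, (b : ℕ) = n - 1 - m → j ≤ b →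
      reaches T c (PState.inside y b false) := by
    intro m
    induction m with
    | zero =>
      intro b hb hjb
      obtain ⟨s, hs, hstep, hneq⟩ := pred hrch (by simp [start])
      obtain ⟨b', u, rfl, hb', hu1, hu2⟩ := step_src_exited hstep hneq
      have hcr : T y b' = Tile.Cross := hyne b' (by rw [Fin.le_def]; omega)
      have hu : u = false := by
        cases u
        · rfl
        · rcases hu1 rfl with h | h <;> rw [hcr] at h <;> exact absurd h (by simp)
      have hbb : b' = b := Fin.ext (by omega)
      rw [← hbb, ← hu]; exact hs
    | succ m IH =>
      intro b hb hjb
      have hjbn : (j : ℕ) ≤ (b : ℕ) := Fin.le_def.mp hjb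
      have hb1 : (b : ℕ) = n - 1 - (m + 1) := hb
      have hmn : m + 1 ≤ n - 1 - (j : ℕ) := by omega
      have h1 : n - 1 - m < n := by omega
      set b1 : Fin n := ⟨n - 1 - m, h1⟩ with hb1'
      have hIH := IH b1 rfl (by rw [Fin.le_def]; show (j : ℕ) ≤ n - 1 - m; omega)
      obtain ⟨s, hs, hstep, hneq⟩ := pred hIH (by simp [start])
      obtain ⟨b', u, rfl, hb', hu1, hu2⟩ := step_src_inside hstep hneq
      have hvalb1 : (b1 : ℕ) = n - 1 - m := rfl
      rw [hvalb1] at hb'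
      have hbb : b' = b := Fin.ext (by omega)
      have hcr : T y b' = Tile.Cross := hyne b' (by rw [Fin.le_def]; omega)
      have hu : u = false := by
        cases u
        · rfl
        · rcases hu1 rfl with h | h <;> rw [hcr] at h <;> exact absurd h (by simp)
      rw [← hbb, ← hu]; exact hs
  have hfin := key (n - 1 - (j : ℕ)) j (by omega) le_rfl
  obtain ⟨s, hs, hstep, hneq⟩ := pred hfin (by simp [start])
  obtain ⟨b', u, rfl, hb', hu1, hu2⟩ := step_src_inside hstep hneq
  obtain ⟨k, hk⟩ := hs
  have := col_mono k y b' u hk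
  omega


lemma len_swap_le {N : ℕ} (π : Equiv.Perm (Fin N)) (x y : Fin N) (hxy : x < y)
    (hval : π y < π x) : len (π * Equiv.swap x y) ≤ len π := by
  classical
  unfold len
  apply Finset.card_le_card_of_injOn
    (fun p => if p.1 < x ∨ y < p.2 then (Equiv.swap x y p.1, Equiv.swap x y p.2) else p)
  · intro p hp
    simp only [Finset.mem_coe, Finset.coe_filter, Set.mem_setOf_eq, Finset.mem_filter, Finset.mem_univ, true_and] at hp ⊢
    obtain ⟨hlt, hinv⟩ := hp
    have hσ2 : π (Equiv.swap x y p.2) < π (Equiv.swap x y p.1) := hinv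
    by_cases hregp : p.1 < x ∨ y < p.2
    · rw [if_pos hregp]
      refine ⟨?_, hσ2⟩
      rcases hregp with h | h
      · rw [Equiv.swap_apply_of_ne_of_ne (ne_of_lt h) (ne_of_lt (lt_trans h hxy))]
        rcases eq_or_ne p.2 x with rfl | h2x
        · rw [Equiv.swap_apply_left]; exact lt_trans h hxy
        rcases eq_or_ne p.2 y with rfl | h2y
        · rw [Equiv.swap_apply_right]; exact h
        · rw [Equiv.swap_apply_of_ne_of_ne h2x h2y]; exact hlt
      · rw [show Equiv.swap x y p.2 = p.2 from
          Equiv.swap_apply_of_ne_of_ne (ne_of_gt (lt_trans hxy h)) (ne_of_gt h)]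
        rcases eq_or_ne p.1 x with rfl | h1x
        · rw [Equiv.swap_apply_left]; exact h
        rcases eq_or_ne p.1 y with rfl | h1y
        · rw [Equiv.swap_apply_right]; exact lt_trans hxy h
        · rw [Equiv.swap_apply_of_ne_of_ne h1x h1y]; exact hlt
    · rw [if_neg hregp]
      push_neg at hregp
      obtain ⟨h1, h2⟩ := hregp
      refine ⟨hlt, ?_⟩
      rcases eq_or_lt_of_le h1 with he1 | hl1
      · rcases eq_or_lt_of_le h2 with he2 | hl2
        · -- p = (x, y): contradiction with hval
          rw [← he1, he2, Equiv.swap_apply_left, Equiv.swap_apply_right] at hσ2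
          exact absurd hσ2 (not_lt.mpr (le_of_lt hval))
        · -- p.1 = x, p.2 < y
          have h2x : p.2 ≠ x := ne_of_gt (he1 ▸ hlt)
          have h2y : p.2 ≠ y := ne_of_lt hl2
          rw [← he1, Equiv.swap_apply_left, Equiv.swap_apply_of_ne_of_ne h2x h2y] at hσ2
          rw [← he1]
          exact lt_trans hσ2 hval
      · rcases eq_or_lt_of_le h2 with he2 | hl2
        · -- p.1 > x, p.2 = y
          have h1x : p.1 ≠ x := ne_of_gt hl1
          have h1y : p.1 ≠ y := ne_of_lt (he2 ▸ hlt)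
          rw [he2, Equiv.swap_apply_right, Equiv.swap_apply_of_ne_of_ne h1x h1y] at hσ2
          rw [he2]
          exact lt_trans hval hσ2
        · -- interior
          have h1x : p.1 ≠ x := ne_of_gt hl1
          have h1y : p.1 ≠ y := ne_of_lt (lt_of_lt_of_le hlt h2)
          have h2x : p.2 ≠ x := ne_of_gt (lt_of_le_of_lt h1 hlt)
          have h2y : p.2 ≠ y := ne_of_lt hl2
          rw [Equiv.swap_apply_of_ne_of_ne h1x h1y,
            Equiv.swap_apply_of_ne_of_ne h2x h2y] at hσ2
          exact hσ2
  · intro p hp q hq heq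
    simp only at heq
    by_cases hrp : p.1 < x ∨ y < p.2 <;> by_cases hrq : q.1 < x ∨ y < q.2
    · rw [if_pos hrp, if_pos hrq, Prod.mk.injEq] at heq
      obtain ⟨e1, e2⟩ := heq
      exact Prod.ext ((Equiv.swap x y).injective e1) ((Equiv.swap x y).injective e2)
    · exfalso
      rw [if_pos hrp, if_neg hrq] at heq
      apply hrq
      rcases hrp with h | h
      · left
        have : q.1 = p.1 := by
          rw [← heq]
          exact Equiv.swap_apply_of_ne_of_ne (ne_of_lt h) (ne_of_lt (lt_trans h hxy))
        rw [this]; exact h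
      · right
        have : q.2 = p.2 := by
          rw [← heq]
          exact Equiv.swap_apply_of_ne_of_ne (ne_of_gt (lt_trans hxy h)) (ne_of_gt h)
        rw [this]; exact h
    · exfalso
      rw [if_neg hrp, if_pos hrq] at heq
      apply hrp
      rcases hrq with h | h
      · left
        have : p.1 = q.1 := by
          rw [heq]
          exact Equiv.swap_apply_of_ne_of_ne (ne_of_lt h) (ne_of_lt (lt_trans h hxy))
        rw [this]; exact h
      · right
        have : p.2 = q.2 := by
          rw [heq]
          exact Equiv.swap_apply_of_ne_of_ne (ne_of_gt (lt_trans hxy h)) (ne_of_gt h)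
        rw [this]; exact h
    · rw [if_neg hrp, if_neg hrq] at heq
      exact heq


end Aux

end BPD

open BPD in
/-- First half of Lemma 2: if `(i, j)` is an r-shaped turn of pipe `p = π(x)`
in a bumpless pipe dream of `π` and every tile east of it in row `i`, or every
tile south of it in column `j`, is a '+'-tile, then the whole region weakly
southeast of `(i, j)` (except `(i, j)` itself) consists of '+'-tiles, and
consequently there is no `y > x` with `π t_{x,y} ⋗ π`. -/
theorem all_cross_southeast (n : ℕ) (T : Tiling n) (π : Equiv.Perm (Fin n))
    (i j x : Fin n)
    (hT : IsBPD T π)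
    (hr : T i j = Tile.R)
    (hp : reaches T (π x) (PState.inside i j true))
    (hrow : (∀ j' : Fin n, j < j' → T i j' = Tile.Cross) ∨
            (∀ i' : Fin n, i < i' → T i' j = Tile.Cross)) :
    (∀ i' j' : Fin n, i ≤ i' → j ≤ j' → (i', j') ≠ (i, j) → T i' j' = Tile.Cross) ∧
    ¬ ∃ y : Fin n, x < y ∧ Covers (π * Equiv.swap x y) π := by
  obtain ⟨hW, hB, htr, hred⟩ := hT
  have hreg := region hW hB i j hr hrow
  refine ⟨hreg, ?_⟩
  rintro ⟨y, hxy, hcov⟩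
  -- the pipe `π x` exits at row `i`, so `x = i`
  have hxi : x = i := exit_unique (htr x) (fwd_exit i j hr hreg hp)
  have hiy : i < y := hxi ▸ hxy
  have hiyn : (i : ℕ) < (y : ℕ) := Fin.lt_def.mp hiy
  have hi1 : (i : ℕ) + 1 < n := by have := y.2; omega
  -- `j ≥ 1`, else the cross at `(i+1, j)` would touch the west boundary
  have hj1 : 1 ≤ (j : ℕ) := by
    by_contra hcon
    have hj0 : (j : ℕ) = 0 := by omega
    have hcr : T ⟨(i : ℕ) + 1, hi1⟩ j = Tile.Cross := by
      apply hreg _ _ (by rw [Fin.le_def]; show (i : ℕ) ≤ (i : ℕ) + 1; omega) le_rfl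
      intro hcontra
      have := congrArg (fun p => (Fin.val p.1)) hcontra
      simp at this
    have hw := hW.2.2.2.2.2 ⟨(i : ℕ) + 1, hi1⟩
    have hjeq : j = ⟨0, by omega⟩ := Fin.ext hj0
    rw [← hjeq, hcr] at hw
    simp [Tile.westE] at hw
  -- the pipe entering at the south boundary in column `j` also exits at row `i`,
  -- hence `π x = j`
  have hpj : π x = j := by
    have h1 : reaches T j (PState.exited i) := fwd_exit i j hr hreg (pipe_up i j hreg)
    have h2 : reaches T (π (π.symm j)) (PState.exited (π.symm j)) := htr _
    rw [Equiv.apply_symm_apply] at h2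
    have h3 : π.symm j = i := exit_unique h2 h1
    rw [hxi, ← h3, Equiv.apply_symm_apply]
  -- every pipe exiting below row `i` enters strictly left of column `j`
  have hyj : (π y : ℕ) < (j : ℕ) := backtrace i j hreg hB hiy (htr y) hj1
  have hπlt : π y < π x := by rw [Fin.lt_def, hpj]; exact hyj
  have hle := len_swap_le π x y hxy hπlt
  have := hcov.2
  omega
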